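/- arXiv:2101.01017 — 5 statements merged into one kernel-verified Lean document; each statement's English description precedes it below -/
import Mathlib

section
/- Let d ≥ 2 and let K ⊂ ℝ^d be the attractor of an iterated function system F = {f_i(x) = r_i O_i(x) + t_i}_{i∈Λ}. Then for every θ ∈ S^{d-1}, every i ∈ Λ and every x ∈ K: if P_θ(x) lies in the interior (relative to the hyperplane L_θ) of P_θ(K), then P_{O_i(θ)}(f_i(x)) lies in the interior (relative to the hyperplane L_{O_i(θ)}) of P_{O_i(θ)}(K). -/
open Metric Set
open scoped RealInnerProductSpace ENNReal

/-- Orthogonal projection onto the affine hyperplane through `y` orthogonal to the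
unit vector `θ` (for `y = 0` this is the projection onto the hyperplane `L_θ`). -/
noncomputable def projH {d : ℕ} (θ y z : EuclideanSpace ℝ (Fin d)) : EuclideanSpace ℝ (Fin d) :=
  z - ⟪z - y, θ⟫ • θ

/-- The affine hyperplane `L_{θ,y}` through `y` orthogonal to `θ`. -/
def affHyp {d : ℕ} (θ y : EuclideanSpace ℝ (Fin d)) : Set (EuclideanSpace ℝ (Fin d)) :=
  {x | ⟪x - y, θ⟫ = 0}

/-- The visible part of `F` from the hyperplane `L_{θ,y}`:
points `z ∈ F` such that the segment from `z` to its projection meets `F` only in `z`. -/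
noncomputable def visible {d : ℕ} (θ y : EuclideanSpace ℝ (Fin d))
    (F : Set (EuclideanSpace ℝ (Fin d))) : Set (EuclideanSpace ℝ (Fin d)) :=
  {z | z ∈ F ∧ segment ℝ z (projH θ y z) ∩ F = {z}}

/-- Interior of `A` relative to the hyperplane `L_θ` through the origin orthogonal to `θ`. -/
def relIntH {d : ℕ} (θ : EuclideanSpace ℝ (Fin d)) (A : Set (EuclideanSpace ℝ (Fin d))) :
    Set (EuclideanSpace ℝ (Fin d)) :=
  {x | x ∈ A ∧ ∃ ε > 0, ∀ z : EuclideanSpace ℝ (Fin d), ⟪z, θ⟫ = 0 → dist z x < ε → z ∈ A}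

/-- The penetrable part of `F` in direction `θ`:
`Pen_θ(F) = F ∩ P_θ⁻¹(P_θ(F) \ Int(P_θ(F)))`. -/
noncomputable def pen {d : ℕ} (θ : EuclideanSpace ℝ (Fin d))
    (F : Set (EuclideanSpace ℝ (Fin d))) : Set (EuclideanSpace ℝ (Fin d)) :=
  F ∩ projH θ 0 ⁻¹' (projH θ 0 '' F \ relIntH θ (projH θ 0 '' F))

/-- The Assouad dimension of a set: the infimum of all `s ≥ 0` such that for some `C > 0`,
for all `0 < r < R` and `x ∈ F`, the set `F ∩ B(x,R)` can be covered by at most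
`C (R/r)^s` balls of radius `r`. -/
noncomputable def dimA {d : ℕ} (F : Set (EuclideanSpace ℝ (Fin d))) : ℝ≥0∞ :=
  ⨅ (s : ℝ) (_ : 0 ≤ s) (_ : ∃ C : ℝ, 0 < C ∧ ∀ x ∈ F, ∀ r R : ℝ, 0 < r → r < R →
      ∃ t : Finset (EuclideanSpace ℝ (Fin d)),
        (t.card : ℝ) ≤ C * (R / r) ^ s ∧ F ∩ ball x R ⊆ ⋃ c ∈ t, ball c r),
    ENNReal.ofReal s

/-- Least number of balls of radius `r` needed to cover `F`. -/
noncomputable def coverN {d : ℕ} (F : Set (EuclideanSpace ℝ (Fin d))) (r : ℝ) : ℕ :=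
  sInf {n : ℕ | ∃ t : Finset (EuclideanSpace ℝ (Fin d)), t.card = n ∧ F ⊆ ⋃ c ∈ t, ball c r}

/-- The upper box-counting dimension of a set. -/
noncomputable def udimB {d : ℕ} (F : Set (EuclideanSpace ℝ (Fin d))) : ℝ≥0∞ :=
  Filter.limsup (fun r : ℝ => ENNReal.ofReal (Real.log (coverN F r) / Real.log (1 / r)))
    (nhdsWithin 0 (Set.Ioi 0))

/-- If `P_θ(x)` is in the interior of `P_θ(K)` relative to `L_θ` for `x ∈ K`, then
`P_{O_i(θ)}(f_i(x))` is in the interior of `P_{O_i(θ)}(K)` relative to `L_{O_i(θ)}`. -/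
theorem stmt11 {d : ℕ} (hd : 2 ≤ d) {Λ : Type} [Fintype Λ]
    (r : Λ → ℝ) (hr : ∀ i, 0 < r i ∧ r i < 1)
    (O : Λ → (EuclideanSpace ℝ (Fin d) ≃ₗᵢ[ℝ] EuclideanSpace ℝ (Fin d)))
    (t : Λ → EuclideanSpace ℝ (Fin d))
    (f : Λ → EuclideanSpace ℝ (Fin d) → EuclideanSpace ℝ (Fin d))
    (hf : ∀ i x, f i x = r i • O i x + t i)
    (K : Set (EuclideanSpace ℝ (Fin d)))
    (hKc : IsCompact K) (hKne : K.Nonempty)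
    (hattr : K = ⋃ i, f i '' K) :
    ∀ θ : EuclideanSpace ℝ (Fin d), ‖θ‖ = 1 → ∀ i : Λ, ∀ x ∈ K,
      projH θ 0 x ∈ relIntH θ (projH θ 0 '' K) →
      projH (O i θ) 0 (f i x) ∈ relIntH (O i θ) (projH (O i θ) 0 '' K) := by
  intro θ hθ i x hx hmem
  obtain ⟨-, ε, hε, hball⟩ := hmem
  have hri := hr i
  set θ' := O i θ with hθ'def
  have hθ' : ‖θ'‖ = 1 := by rw [hθ'def, (O i).norm_map, hθ]
  have hfiK : ∀ y, y ∈ K → f i y ∈ K := fun y hy => by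
    rw [hattr]; exact Set.mem_iUnion.2 ⟨i, Set.mem_image_of_mem _ hy⟩
  have hcθ' : ⟪projH θ' 0 (t i), θ'⟫ = 0 := by
    simp only [projH, sub_zero, inner_sub_left, real_inner_smul_left]
    have h1 : ⟪θ', θ'⟫ = 1 := by
      rw [real_inner_self_eq_norm_sq, hθ']; norm_num
    rw [h1]; ring
  have hkey : ∀ z, projH θ' 0 (f i z) = r i • (O i) (projH θ 0 z) + projH θ' 0 (t i) := by
    intro z
    simp only [projH, sub_zero, hf, map_sub, map_smul]
    have h1 : ⟪r i • (O i) z + t i, θ'⟫ = r i * ⟪z, θ⟫ + ⟪t i, θ'⟫ := by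
      rw [inner_add_left, real_inner_smul_left, hθ'def, (O i).inner_map_map]
    rw [h1, ← hθ'def]
    module
  refine ⟨⟨f i x, hfiK x hx, rfl⟩, r i * ε, mul_pos hri.1 hε, ?_⟩
  intro z hz hdist
  set c := projH θ' 0 (t i) with hcdef
  set w := (O i).symm ((r i)⁻¹ • (z - c)) with hwdef
  have hOw : (O i) w = (r i)⁻¹ • (z - c) := (O i).apply_symm_apply _
  have hzw : z = r i • (O i) w + c := by
    rw [hOw, smul_smul, mul_inv_cancel₀ (ne_of_gt hri.1), one_smul]
    abel
  have hwθ : ⟪w, θ⟫ = 0 := by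
    have h2 : ⟪(O i) w, θ'⟫ = ⟪w, θ⟫ := by rw [hθ'def, (O i).inner_map_map]
    rw [← h2, hOw, real_inner_smul_left, inner_sub_left, hz, hcθ']
    ring
  have hwdist : dist w (projH θ 0 x) < ε := by
    have h2 : dist z (projH θ' 0 (f i x)) = r i * dist w (projH θ 0 x) := by
      rw [hkey, hzw, dist_eq_norm]
      have h3 : r i • (O i) w + c - (r i • (O i) (projH θ 0 x) + c)
          = r i • ((O i) w - (O i) (projH θ 0 x)) := by module
      rw [h3, norm_smul, ← map_sub, (O i).norm_map, ← dist_eq_norm]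
      simp [abs_of_pos hri.1]
    rw [h2] at hdist
    exact (mul_lt_mul_iff_right₀ hri.1).mp hdist
  obtain ⟨y, hyK, hy⟩ := hball w hwθ hwdist
  exact ⟨f i y, hfiK y hyK, by rw [hkey, hy, ← hzw]⟩
end

section
/- Let d ≥ 2 and let K ⊂ ℝ^d be the attractor of an iterated function system F = {f_i(x) = r_i O_i(x) + t_i}_{i∈Λ}. Then for every θ ∈ S^{d-1}, the penetrable parts satisfy Pen_θ(K) ⊂ ⋃_{i∈Λ} f_i(Pen_{O_i^{-1}(θ)}(K)). -/
open Metric Set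
open scoped RealInnerProductSpace ENNReal

/-- The penetrable parts form a subattractor list:
`Pen_θ(K) ⊆ ⋃ᵢ f_i(Pen_{O_i⁻¹(θ)}(K))`. -/
theorem stmt12 {d : ℕ} (hd : 2 ≤ d) {Λ : Type} [Fintype Λ]
    (r : Λ → ℝ) (hr : ∀ i, 0 < r i ∧ r i < 1)
    (O : Λ → (EuclideanSpace ℝ (Fin d) ≃ₗᵢ[ℝ] EuclideanSpace ℝ (Fin d)))
    (t : Λ → EuclideanSpace ℝ (Fin d))
    (f : Λ → EuclideanSpace ℝ (Fin d) → EuclideanSpace ℝ (Fin d))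
    (hf : ∀ i x, f i x = r i • O i x + t i)
    (K : Set (EuclideanSpace ℝ (Fin d)))
    (hKc : IsCompact K) (hKne : K.Nonempty)
    (hattr : K = ⋃ i, f i '' K) :
    ∀ θ : EuclideanSpace ℝ (Fin d), ‖θ‖ = 1 →
      pen θ K ⊆ ⋃ i, f i '' pen ((O i).symm θ) K := by
  intro θ hθ x hx
  obtain ⟨hxK, hximg, hxnot⟩ : x ∈ K ∧ projH θ 0 x ∈ projH θ 0 '' K ∧
      projH θ 0 x ∉ relIntH θ (projH θ 0 '' K) := ⟨hx.1, hx.2.1, hx.2.2⟩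
  have hxU : x ∈ ⋃ i, f i '' K := hattr ▸ hxK
  obtain ⟨i, y, hyK, hxy⟩ := mem_iUnion.1 hxU
  set θ' := (O i).symm θ with hθ'
  have hOθ' : O i θ' = θ := (O i).apply_symm_apply θ
  have hri : 0 < r i := (hr i).1
  -- key commutation identity
  have keyA : ∀ w : EuclideanSpace ℝ (Fin d),
      projH θ 0 (f i w) = r i • O i (projH θ' 0 w) + projH θ 0 (t i) := by
    intro w
    simp only [projH, sub_zero, hf]
    have h1 : ⟪r i • (O i) w + t i, θ⟫ = r i * ⟪w, θ'⟫ + ⟪t i, θ⟫ := by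
      rw [inner_add_left, real_inner_smul_left]
      congr 2
      rw [← hOθ', LinearIsometryEquiv.inner_map_map]
    rw [h1, map_sub, map_smul]
    rw [hOθ']
    module
  have hPtθ : ⟪projH θ 0 (t i), θ⟫ = 0 := by
    simp only [projH, sub_zero, inner_sub_left, real_inner_smul_left,
      real_inner_self_eq_norm_sq, hθ]
    ring
  -- K is invariant
  have hKinv : ∀ j w, w ∈ K → f j w ∈ K := fun j w hw => by
    rw [hattr]; exact mem_iUnion.2 ⟨j, mem_image_of_mem _ hw⟩
  refine mem_iUnion.2 ⟨i, y, ⟨hyK, mem_image_of_mem _ hyK, ?_⟩, hxy⟩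
  intro hrel
  obtain ⟨hwmem, ε, hε, hball⟩ := hrel
  apply hxnot
  refine ⟨hximg, r i * ε, by positivity, ?_⟩
  intro z hzθ hzdist
  set u := (r i)⁻¹ • (O i).symm (z - projH θ 0 (t i)) with hu
  have hgu : r i • O i u + projH θ 0 (t i) = z := by
    rw [hu, LinearIsometryEquiv.map_smul, (O i).apply_symm_apply, smul_smul,
      mul_inv_cancel₀ hri.ne', one_smul, sub_add_cancel]
  have huθ' : ⟪u, θ'⟫ = 0 := by
    rw [hu, real_inner_smul_left, hθ', LinearIsometryEquiv.inner_map_map,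
      inner_sub_left, hzθ, hPtθ]
    ring
  have hdist : dist z (projH θ 0 x) = r i * dist u (projH θ' 0 y) := by
    rw [← hgu, ← hxy, keyA y, dist_eq_norm, dist_eq_norm]
    have e1 : r i • O i u + projH θ 0 (t i) -
        (r i • O i (projH θ' 0 y) + projH θ 0 (t i)) = r i • O i (u - projH θ' 0 y) := by
      rw [map_sub]; module
    rw [e1, norm_smul, Real.norm_eq_abs, abs_of_pos hri, (O i).norm_map]
  have hltε : dist u (projH θ' 0 y) < ε := by
    rw [hdist] at hzdist
    exact (mul_lt_mul_iff_right₀ hri).1 hzdist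
  obtain ⟨k, hk, hku⟩ := hball u huθ' hltε
  exact ⟨f i k, hKinv i k hk, by rw [keyA k, hku, hgu]⟩
end

section
/- Let 1/3 ≤ λ < 1/2 and let K_λ ⊂ ℝ^2 be the four corner Cantor set with contraction ratio λ, i.e. the attractor of the four maps f_j(x) = λx + (1−λ)c_j with c_j ∈ {(0,0), (1,0), (1,1), (0,1)}. Then for every θ ∈ S^1 \ {±(1,0), ±(0,1)}, the projection P_θ(K_λ) is a finite union of closed line segments of the line L_θ. -/
/-!
Write `P_θ z = ⟪z, e⟫ e`, where `e` is `θ` rotated by a right angle. The functional `⟪·, e⟫`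
conjugates the four maps to `x ↦ λ x + d` with digits `d ∈ {0, α} + {0, β}`, where
`α = -(1 - λ) θ₂` and `β = (1 - λ) θ₁` are nonzero off the axes. Hence `⟪K, e⟫ = C(α) + C(β)` with
`C(a) = {∑ λᵏ εₖ a : εₖ ∈ {0, 1}}`, and up to translation `0 < a ≤ b`.

If `(1 - 2λ) b ≤ a`, the digits `0, a, b, a + b` are spaced closely enough (this needs `λ ≥ 1/3`)
that `C(a) + C(b)` is a single interval. Otherwise `C(b) = C(λ b) ∪ (b + C(λ b))` replaces `b` by
`λ b`; as `λⁿ b → 0`, the gap condition holds after finitely many splittings, which leaves a finite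
union of translated intervals.
-/

open Metric Set
open scoped RealInnerProductSpace ENNReal

open Filter Topology Pointwise Bornology

namespace FourCorner

/-- For `0 ≤ l < 1` and bounded `T`, the attractor of the maps `x ↦ l * x + t`, `t ∈ T`. -/
def digitSums (l : ℝ) (T : Set ℝ) : Set ℝ :=
  {x | ∃ t : ℕ → ℝ, (∀ k, t k ∈ T) ∧ HasSum (fun k => l ^ k * t k) x}

section DigitSums

variable {l : ℝ} {T : Set ℝ}

lemma summable_pow_mul_of_isBounded (hl0 : 0 ≤ l) (hl1 : l < 1) (hT : IsBounded T)
    {t : ℕ → ℝ} (ht : ∀ k, t k ∈ T) : Summable fun k => l ^ k * t k := by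
  obtain ⟨m, hm⟩ := isBounded_iff_forall_norm_le.mp hT
  refine Summable.of_norm_bounded ((summable_geometric_of_lt_one hl0 hl1).mul_right m) fun k => ?_
  rw [norm_mul, norm_pow, Real.norm_of_nonneg hl0]
  exact mul_le_mul_of_nonneg_left (hm _ (ht k)) (pow_nonneg hl0 k)

lemma subset_digitSums (hl0 : 0 ≤ l) (hl1 : l < 1) {A : Set ℝ} (hA : IsBounded A)
    (hT : IsBounded T) (hstep : ∀ y ∈ A, ∃ t ∈ T, ∃ z ∈ A, y = l * z + t) :
    A ⊆ digitSums l T := by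
  intro x hx
  choose! digit hdigit next hnext hdecomp using hstep
  set orbit : ℕ → ℝ := fun n => next^[n] x
  have horbit : ∀ n, orbit n ∈ A := fun n => MapsTo.iterate (f := next) (s := A) hnext n hx
  have hsucc : ∀ n, orbit (n + 1) = next (orbit n) := fun n =>
    Function.iterate_succ_apply' _ _ _
  have hpartial : ∀ n,
      ∑ k ∈ Finset.range n, l ^ k * digit (orbit k) = x - l ^ n * orbit n := by
    intro n
    induction n with
    | zero => simp [orbit]
    | succ n ih =>
      rw [Finset.sum_range_succ, ih, hsucc]
      linear_combination (-l ^ n) * hdecomp _ (horbit n)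
  have hdigits : ∀ k, digit (orbit k) ∈ T := fun k => hdigit _ (horbit k)
  refine ⟨fun k => digit (orbit k), hdigits,
    (summable_pow_mul_of_isBounded hl0 hl1 hT hdigits).hasSum_iff_tendsto_nat.mpr ?_⟩
  obtain ⟨R, hR⟩ := isBounded_iff_forall_norm_le.mp hA
  have hremainder : Tendsto (fun n => l ^ n * orbit n) atTop (𝓝 0) := by
    refine squeeze_zero_norm (fun n => ?_) (by
      simpa using (tendsto_pow_atTop_nhds_zero_of_lt_one hl0 hl1).mul_const R)
    rw [norm_mul, norm_pow, Real.norm_of_nonneg hl0]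
    exact mul_le_mul_of_nonneg_left (hR _ (horbit n)) (pow_nonneg hl0 n)
  simpa [hpartial] using tendsto_const_nhds.sub hremainder

lemma digitSums_subset (hl0 : 0 ≤ l) (hl1 : l < 1) {S : Set ℝ} (hS : S.Nonempty)
    (hSc : IsClosed S) (hmaps : ∀ t ∈ T, ∀ z ∈ S, l * z + t ∈ S) :
    digitSums l T ⊆ S := by
  rintro x ⟨t, ht, hsum⟩
  obtain ⟨y, hy⟩ := hS
  have happrox : ∀ n (t : ℕ → ℝ), (∀ k, t k ∈ T) →
      ∑ k ∈ Finset.range n, l ^ k * t k + l ^ n * y ∈ S := by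
    intro n
    induction n with
    | zero => simpa using fun _ _ => hy
    | succ n ih =>
      intro t ht
      convert hmaps _ (ht 0) _ (ih (fun k => t (k + 1)) fun k => ht (k + 1)) using 1
      rw [Finset.sum_range_succ', mul_add, Finset.mul_sum]
      simp only [pow_succ', pow_zero, one_mul, mul_assoc]
      ring
  have hlim :
      Tendsto (fun n => ∑ k ∈ Finset.range n, l ^ k * t k + l ^ n * y) atTop (𝓝 x) := by
    simpa using hsum.tendsto_sum_nat.add
      ((tendsto_pow_atTop_nhds_zero_of_lt_one hl0 hl1).mul_const y)
  exact hSc.mem_of_tendsto hlim (Eventually.of_forall fun n => happrox n t ht)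

lemma image_eq_digitSums (hl0 : 0 ≤ l) (hl1 : l < 1) {ι X : Type*} [Finite ι]
    [TopologicalSpace X] {K : Set X} (hK : IsCompact K) (hKne : K.Nonempty) {f : ι → X → X}
    (hattr : K = ⋃ j, f j '' K) {g : X → ℝ} (hg : ContinuousOn g K) {d : ι → ℝ}
    (hgf : ∀ j x, g (f j x) = l * g x + d j) : g '' K = digitSums l (range d) := by
  have hgK : IsCompact (g '' K) := hK.image_of_continuousOn hg
  have hmem : ∀ j, ∀ x ∈ K, f j x ∈ K := fun j x hx => by
    rw [hattr]; exact mem_iUnion_of_mem j (mem_image_of_mem _ hx)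
  refine Subset.antisymm (subset_digitSums hl0 hl1 hgK.isBounded (finite_range d).isBounded ?_)
    (digitSums_subset hl0 hl1 (hKne.image g) hgK.isClosed ?_)
  · rintro _ ⟨y, hy, rfl⟩
    rw [hattr] at hy
    obtain ⟨j, x, hx, rfl⟩ := mem_iUnion.mp hy
    exact ⟨d j, mem_range_self j, g x, mem_image_of_mem g hx, hgf j x⟩
  · rintro _ ⟨j, rfl⟩ _ ⟨x, hx, rfl⟩
    exact ⟨f j x, hmem j x hx, hgf j x⟩

lemma digitSums_add (hl0 : 0 ≤ l) (hl1 : l < 1) {U : Set ℝ} (hT : IsBounded T)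
    (hU : IsBounded U) : digitSums l (T + U) = digitSums l T + digitSums l U := by
  refine Subset.antisymm ?_ ?_
  · rintro x ⟨t, ht, hsum⟩
    choose u hu v hv huv using ht
    obtain ⟨y, hy⟩ := summable_pow_mul_of_isBounded hl0 hl1 hT hu
    obtain ⟨z, hz⟩ := summable_pow_mul_of_isBounded hl0 hl1 hU hv
    have hyz : HasSum (fun k => l ^ k * t k) (y + z) := by
      simpa [← huv, mul_add] using hy.add hz
    exact ⟨y, ⟨u, hu, hy⟩, z, ⟨v, hv, hz⟩, hyz.unique hsum⟩
  · rintro _ ⟨y, ⟨u, hu, hy⟩, z, ⟨v, hv, hz⟩, rfl⟩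
    exact ⟨fun k => u k + v k, fun k => add_mem_add (hu k) (hv k), by
      simpa [mul_add] using hy.add hz⟩

lemma digitSums_image_affine (hl0 : 0 ≤ l) (hl1 : l < 1) {c : ℝ} (hc : c ≠ 0) (d : ℝ) :
    digitSums l ((fun t => c * t + d) '' T) = (fun x => c * x + d / (1 - l)) '' digitSums l T := by
  have hgeom : HasSum (fun k => l ^ k * d) (d / (1 - l)) := by
    simpa [div_eq_inv_mul] using (hasSum_geometric_of_lt_one hl0 hl1).mul_right d
  refine Subset.antisymm ?_ ?_
  · rintro x ⟨s, hs, hsum⟩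
    choose t ht hts using hs
    have hterm : (fun k => l ^ k * t k) = fun k => (l ^ k * s k - l ^ k * d) / c := by
      ext k
      rw [← hts]
      field_simp
      ring
    have hsum' : HasSum (fun k => l ^ k * t k) ((x - d / (1 - l)) / c) := by
      rw [hterm]; exact (hsum.sub hgeom).div_const c
    exact ⟨_, ⟨t, ht, hsum'⟩, by field_simp; ring⟩
  · rintro _ ⟨x, ⟨t, ht, hsum⟩, rfl⟩
    refine ⟨fun k => c * t k + d, fun k => mem_image_of_mem _ (ht k), ?_⟩
    have hterm : (fun k => l ^ k * (c * t k + d)) = fun k => c * (l ^ k * t k) + l ^ k * d := by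
      ext k; ring
    show HasSum (fun k => l ^ k * (c * t k + d)) _
    rw [hterm]; exact (hsum.mul_left c).add hgeom

lemma digitSums_eq_biUnion (hl0 : 0 ≤ l) (hl1 : l < 1) (hT : IsBounded T) :
    digitSums l T = ⋃ t ∈ T, (fun x => l * x + t) '' digitSums l T := by
  refine Subset.antisymm ?_ ?_
  · rintro x ⟨t, ht, hsum⟩
    obtain ⟨y, hy⟩ := summable_pow_mul_of_isBounded hl0 hl1 hT fun k => ht (k + 1)
    have hshift : HasSum (fun k => l ^ (k + 1) * t (k + 1)) (l * y) := by
      simpa only [pow_succ', mul_assoc] using hy.mul_left l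
    have hx : l * y + t 0 = x := by
      simpa [add_comm] using hshift.zero_add.unique hsum
    exact mem_biUnion (ht 0) ⟨y, ⟨fun k => t (k + 1), fun k => ht (k + 1), hy⟩, hx⟩
  · simp only [iUnion_subset_iff]
    rintro t0 ht0 _ ⟨x, ⟨t, ht, hsum⟩, rfl⟩
    set t' : ℕ → ℝ := fun k => Nat.casesOn k t0 t
    refine ⟨t', fun k => ?_, ?_⟩
    · cases k <;> simp [t', ht0, ht]
    · have hshift : HasSum (fun k => l ^ (k + 1) * t k) (l * x) := by
        simpa only [pow_succ', mul_assoc] using hsum.mul_left l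
      simpa [t', add_comm] using hshift.zero_add (f := fun k => l ^ k * t' k)

lemma digitSums_eq_Icc (hl0 : 0 < l) (hl1 : l < 1) {m : ℝ} (hm : 0 ≤ m) (hT : T ⊆ Icc 0 m)
    (hcover : ∀ x ∈ Icc 0 (m / (1 - l)), ∃ t ∈ T, t ≤ x ∧ x ≤ t + l * (m / (1 - l))) :
    digitSums l T = Icc 0 (m / (1 - l)) := by
  set M := m / (1 - l)
  have hM : m + l * M = M := by
    simp only [M]; field_simp [(sub_pos.mpr hl1).ne']; ring
  have hM0 : 0 ≤ M := div_nonneg hm (sub_pos.mpr hl1).le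
  refine Subset.antisymm ?_ ?_
  · refine digitSums_subset hl0.le hl1 (nonempty_Icc.mpr hM0) isClosed_Icc ?_
    intro t ht z hz
    obtain ⟨ht0, htm⟩ := hT ht
    exact ⟨by nlinarith [hz.1], by nlinarith [hz.2]⟩
  · refine subset_digitSums hl0.le hl1 (isBounded_Icc 0 M) ((isBounded_Icc 0 m).subset hT) ?_
    intro y hy
    obtain ⟨t, ht, hty, hyt⟩ := hcover y hy
    refine ⟨t, ht, (y - t) / l, ⟨by positivity [sub_nonneg.mpr hty], ?_⟩,
      by field_simp; ring⟩
    rw [div_le_iff₀ hl0]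
    linarith

lemma pair_add_pair (a b : ℝ) : ({0, a} + {0, b} : Set ℝ) = {0, a, b, a + b} := by
  simp only [insert_eq, union_add, add_union, singleton_add_singleton, add_zero, zero_add,
    union_assoc]

end DigitSums

def IsFiniteUnionIcc (A : Set ℝ) : Prop :=
  ∃ s : Set (ℝ × ℝ), s.Finite ∧ (∀ p ∈ s, p.1 < p.2) ∧ A = ⋃ p ∈ s, Icc p.1 p.2

lemma image_smul_Icc {E : Type*} [AddCommGroup E] [Module ℝ E] (e : E) {a b : ℝ}
    (hab : a ≤ b) : (fun s : ℝ => s • e) '' Icc a b = segment ℝ (a • e) (b • e) := by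
  rw [← segment_eq_Icc hab]
  exact image_segment ℝ (LinearMap.toSpanSingleton ℝ E e).toAffineMap a b

namespace IsFiniteUnionIcc

variable {A B : Set ℝ}

lemma of_Icc {a b : ℝ} (h : a < b) : IsFiniteUnionIcc (Icc a b) :=
  ⟨{(a, b)}, finite_singleton _, by simpa using h, by simp⟩

lemma union (hA : IsFiniteUnionIcc A) (hB : IsFiniteUnionIcc B) : IsFiniteUnionIcc (A ∪ B) := by
  obtain ⟨s, hs, hslt, rfl⟩ := hA
  obtain ⟨t, ht, htlt, rfl⟩ := hB
  exact ⟨s ∪ t, hs.union ht, fun p hp => hp.elim (hslt p) (htlt p),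
    (biUnion_union s t _).symm⟩

lemma add_singleton (hA : IsFiniteUnionIcc A) (c : ℝ) : IsFiniteUnionIcc (A + {c}) := by
  obtain ⟨s, hs, hslt, rfl⟩ := hA
  refine ⟨(fun p => (p.1 + c, p.2 + c)) '' s, hs.image _, ?_, ?_⟩
  · rintro _ ⟨p, hp, rfl⟩
    simpa using hslt p hp
  · simp only [biUnion_image, Set.add_singleton, image_iUnion₂, image_add_const_Icc]

lemma exists_image_smul_eq_iUnion_segment {E : Type*} [AddCommGroup E]
    [Module ℝ E] {A : Set ℝ} (hA : IsFiniteUnionIcc A) {e : E} (he : e ≠ 0) :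
    ∃ (n : ℕ) (a b : Fin n → E), (∀ j, a j ≠ b j) ∧
      (fun s : ℝ => s • e) '' A = ⋃ j, segment ℝ (a j) (b j) := by
  obtain ⟨s, hs, hlt, rfl⟩ := hA
  have := hs.to_subtype
  set σ := (Finite.equivFin s).symm
  refine ⟨Nat.card s, fun j => (σ j).1.1 • e, fun j => (σ j).1.2 • e,
    fun j h => (hlt _ (σ j).2).ne (smul_left_injective ℝ he h), ?_⟩
  rw [image_iUnion₂, biUnion_eq_iUnion, ← σ.surjective.iUnion_comp]
  exact iUnion_congr fun j => image_smul_Icc e (hlt _ (σ j).2).le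

end IsFiniteUnionIcc

def scaledCantor (l a : ℝ) : Set ℝ := digitSums l {0, a}

section ScaledCantor

variable {l : ℝ}

lemma isBounded_pair (a : ℝ) : IsBounded ({0, a} : Set ℝ) := (toFinite _).isBounded

lemma scaledCantor_eq_union (hl0 : 0 < l) (hl1 : l < 1) (b : ℝ) :
    scaledCantor l b = scaledCantor l (l * b) ∪ (scaledCantor l (l * b) + {b}) := by
  have hscale : scaledCantor l (l * b) = (fun x => l * x) '' scaledCantor l b := by
    simpa [scaledCantor, image_pair] using digitSums_image_affine hl0.le hl1 hl0.ne' 0 (T := {0, b})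
  rw [hscale, add_singleton, image_image]
  conv_lhs => rw [scaledCantor, digitSums_eq_biUnion hl0.le hl1 (isBounded_pair b)]
  simp [scaledCantor, add_comm]

lemma scaledCantor_neg (hl0 : 0 ≤ l) (hl1 : l < 1) (a : ℝ) :
    scaledCantor l (-a) = scaledCantor l a + {-a / (1 - l)} := by
  have h := digitSums_image_affine hl0 hl1 one_ne_zero (-a) (T := {0, a})
  simpa [scaledCantor, image_pair, add_singleton, pair_comm] using h

lemma exists_scaledCantor_eq_abs_add (hl0 : 0 ≤ l) (hl1 : l < 1) (a : ℝ) :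
    ∃ c, scaledCantor l a = scaledCantor l |a| + {c} := by
  rcases abs_cases a with ⟨h, -⟩ | ⟨h, -⟩
  · exact ⟨0, by simp [h]⟩
  · refine ⟨a / (1 - l), ?_⟩
    rw [h]
    simpa using scaledCantor_neg hl0 hl1 (-a)

lemma scaledCantor_add_eq_Icc (hl : 1 / 3 ≤ l) (hl1 : l < 1) {a b : ℝ} (ha : 0 ≤ a)
    (hab : a ≤ b) (hba : (1 - 2 * l) * b ≤ a) :
    scaledCantor l a + scaledCantor l b = Icc 0 ((a + b) / (1 - l)) := by
  have hl0 : 0 < l := by linarith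
  rw [scaledCantor, scaledCantor,
    ← digitSums_add hl0.le hl1 (isBounded_pair a) (isBounded_pair b), pair_add_pair]
  refine digitSums_eq_Icc hl0 hl1 (by linarith) ?_ ?_
  · rintro t (rfl | rfl | rfl | rfl) <;> constructor <;> linarith
  · set M := (a + b) / (1 - l)
    have hM : M * (1 - l) = a + b := div_mul_cancel₀ _ (by linarith)
    -- The digits `0 ≤ a ≤ b ≤ a + b` are at most `l * M` apart: `haM` needs `l ≥ 1/3`,
    -- `hbM` is the gap condition.
    have haM : a ≤ l * M := by
      refine le_of_mul_le_mul_right ?_ (by linarith : (0 : ℝ) < 1 - l)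
      nlinarith [mul_le_mul_of_nonneg_left hab hl0.le,
        mul_nonneg ha (by linarith : 0 ≤ 3 * l - 1)]
    have hbM : b ≤ a + l * M := by
      refine le_of_mul_le_mul_right ?_ (by linarith : (0 : ℝ) < 1 - l)
      nlinarith
    rintro x ⟨hx0, hxM⟩
    rcases le_or_gt x (l * M) with h0 | h0
    · exact ⟨0, by simp, hx0, by linarith⟩
    rcases le_or_gt x (a + l * M) with h1 | h1
    · exact ⟨a, by simp, by linarith, h1⟩
    rcases le_or_gt x (b + l * M) with h2 | h2
    · exact ⟨b, by simp, by linarith, h2⟩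
    · exact ⟨a + b, by simp, by linarith, by nlinarith⟩

/-- `n` is the number of splittings `b ↦ l * b` (`scaledCantor_eq_union`) after which the gap
condition of `scaledCantor_add_eq_Icc` holds. -/
lemma isFiniteUnionIcc_scaledCantor_add_of_pow (hl : 1 / 3 ≤ l) (hl1 : l < 1) {a : ℝ}
    (ha : 0 < a) (n : ℕ) :
    ∀ b, a ≤ b → (1 - 2 * l) * (l ^ n * b) ≤ a →
      IsFiniteUnionIcc (scaledCantor l a + scaledCantor l b) := by
  have hl0 : 0 < l := by linarith
  have hIcc : ∀ b, a ≤ b → (1 - 2 * l) * b ≤ a →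
      IsFiniteUnionIcc (scaledCantor l a + scaledCantor l b) := fun b hab hba => by
    rw [scaledCantor_add_eq_Icc hl hl1 ha.le hab hba]
    exact .of_Icc (div_pos (by linarith) (by linarith))
  induction n with
  | zero => simpa using hIcc
  | succ n ih =>
    intro b hab hpow
    rcases le_or_gt ((1 - 2 * l) * b) a with hba | hba
    · exact hIcc b hab hba
    have hlb : a ≤ l * b := by nlinarith
    have hsmall := ih (l * b) hlb (by rw [pow_succ] at hpow; linarith [hpow])
    rw [scaledCantor_eq_union hl0 hl1 b, add_union, ← add_assoc]
    exact hsmall.union (hsmall.add_singleton b)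

lemma isFiniteUnionIcc_scaledCantor_add_of_pos (hl : 1 / 3 ≤ l) (hl' : l < 1 / 2) {a b : ℝ}
    (ha : 0 < a) (hb : 0 < b) : IsFiniteUnionIcc (scaledCantor l a + scaledCantor l b) := by
  wlog hab : a ≤ b generalizing a b
  · rw [add_comm]; exact this hb ha (le_of_not_ge hab)
  have hgap : 0 < (1 - 2 * l) * b := mul_pos (by linarith) hb
  obtain ⟨n, hn⟩ := exists_pow_lt_of_lt_one (div_pos ha hgap) (by linarith : l < 1)
  refine isFiniteUnionIcc_scaledCantor_add_of_pow hl (by linarith) ha n b hab ?_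
  rw [lt_div_iff₀ hgap] at hn
  linarith

lemma isFiniteUnionIcc_scaledCantor_add (hl : 1 / 3 ≤ l) (hl' : l < 1 / 2) {a b : ℝ}
    (ha : a ≠ 0) (hb : b ≠ 0) : IsFiniteUnionIcc (scaledCantor l a + scaledCantor l b) := by
  obtain ⟨c, hc⟩ := exists_scaledCantor_eq_abs_add (by linarith) (by linarith : l < 1) a
  obtain ⟨d, hd⟩ := exists_scaledCantor_eq_abs_add (by linarith) (by linarith : l < 1) b
  rw [hc, hd, add_add_add_comm, singleton_add_singleton]
  exact (isFiniteUnionIcc_scaledCantor_add_of_pos hl hl' (abs_pos.mpr ha)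
    (abs_pos.mpr hb)).add_singleton _

end ScaledCantor

lemma coord_zero_sq_add_coord_one_sq {θ : EuclideanSpace ℝ (Fin 2)} (hθ : ‖θ‖ = 1) :
    θ 0 ^ 2 + θ 1 ^ 2 = 1 := by
  simpa [hθ, Fin.sum_univ_two] using (EuclideanSpace.real_norm_sq_eq θ).symm

lemma projH_eq_inner_smul {θ : EuclideanSpace ℝ (Fin 2)} (hθ : ‖θ‖ = 1)
    (z : EuclideanSpace ℝ (Fin 2)) :
    projH θ 0 z = ⟪z, !₂[-θ 1, θ 0]⟫ • !₂[-θ 1, θ 0] := by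
  ext i
  fin_cases i <;> simp [projH, PiLp.inner_apply, Fin.sum_univ_two] <;>
    linear_combination (-z _) * coord_zero_sq_add_coord_one_sq hθ

lemma coord_ne_zero_of_ne_axes {θ : EuclideanSpace ℝ (Fin 2)} (hθ : ‖θ‖ = 1)
    (hθ1 : θ ≠ !₂[1, 0]) (hθ2 : θ ≠ !₂[-1, 0]) (hθ3 : θ ≠ !₂[0, 1])
    (hθ4 : θ ≠ !₂[0, -1]) : θ 0 ≠ 0 ∧ θ 1 ≠ 0 := by
  have hnorm := coord_zero_sq_add_coord_one_sq hθ
  constructor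
  · intro h0
    obtain h1 | h1 : θ 1 = 1 ∨ θ 1 = -1 := by simpa [h0] using hnorm
    · exact hθ3 (by ext i; fin_cases i <;> simp [h0, h1])
    · exact hθ4 (by ext i; fin_cases i <;> simp [h0, h1])
  · intro h1
    obtain h0 | h0 : θ 0 = 1 ∨ θ 0 = -1 := by simpa [h1] using hnorm
    · exact hθ1 (by ext i; fin_cases i <;> simp [h0, h1])
    · exact hθ2 (by ext i; fin_cases i <;> simp [h0, h1])

lemma range_inner_corners (θ : EuclideanSpace ℝ (Fin 2)) (l : ℝ) :
    range (fun j => (1 - l) * ⟪(![!₂[0, 0], !₂[1, 0], !₂[1, 1], !₂[0, 1]] :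
      Fin 4 → EuclideanSpace ℝ (Fin 2)) j, !₂[-θ 1, θ 0]⟫) =
      {0, -((1 - l) * θ 1)} + {0, (1 - l) * θ 0} := by
  rw [pair_add_pair]
  ext x
  simp [Fin.exists_fin_succ, PiLp.inner_apply, Fin.sum_univ_two]
  grind

end FourCorner

open FourCorner

/-- For the four corner Cantor set with contraction ratio `λ ∈ [1/3, 1/2)` and every
direction `θ ∈ S¹` other than `±(1,0), ±(0,1)`, the projection `P_θ(K_λ)` is a finite
union of (nondegenerate) closed line segments. -/
theorem stmt15 (l : ℝ) (hl : 1/3 ≤ l) (hl' : l < 1/2)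
    (c : Fin 4 → EuclideanSpace ℝ (Fin 2))
    (hc : c = ![!₂[0, 0], !₂[1, 0], !₂[1, 1], !₂[0, 1]])
    (f : Fin 4 → EuclideanSpace ℝ (Fin 2) → EuclideanSpace ℝ (Fin 2))
    (hf : ∀ j x, f j x = l • x + (1 - l) • c j)
    (K : Set (EuclideanSpace ℝ (Fin 2)))
    (hKc : IsCompact K) (hKne : K.Nonempty)
    (hattr : K = ⋃ j, f j '' K)
    (θ : EuclideanSpace ℝ (Fin 2)) (hθ : ‖θ‖ = 1)
    (hθ1 : θ ≠ !₂[1, 0]) (hθ2 : θ ≠ !₂[-1, 0]) (hθ3 : θ ≠ !₂[0, 1]) (hθ4 : θ ≠ !₂[0, -1]) :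
    ∃ (n : ℕ) (a b : Fin n → EuclideanSpace ℝ (Fin 2)),
      (∀ j, a j ≠ b j) ∧ projH θ 0 '' K = ⋃ j, segment ℝ (a j) (b j) := by
  obtain ⟨hθx, hθy⟩ := coord_ne_zero_of_ne_axes hθ hθ1 hθ2 hθ3 hθ4
  set e : EuclideanSpace ℝ (Fin 2) := !₂[-θ 1, θ 0]
  have he : e ≠ 0 := fun h => hθx (by simpa [e] using congr_arg (· 1) h)
  have hconj : ∀ j x, ⟪f j x, e⟫ = l * ⟪x, e⟫ + (1 - l) * ⟪c j, e⟫ := fun j x => by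
    rw [hf, inner_add_left, real_inner_smul_left, real_inner_smul_left]
  have hdigits : (fun z => ⟪z, e⟫) '' K =
      scaledCantor l (-((1 - l) * θ 1)) + scaledCantor l ((1 - l) * θ 0) := by
    rw [image_eq_digitSums (by linarith) (by linarith) hKc hKne hattr
      (by fun_prop : Continuous fun z => ⟪z, e⟫).continuousOn hconj,
      hc, range_inner_corners, digitSums_add (by linarith) (by linarith) (isBounded_pair _)
      (isBounded_pair _)]
    rfl
  have hproj : projH θ 0 '' K = (fun s : ℝ => s • e) '' ((fun z => ⟪z, e⟫) '' K) := by
    rw [image_image]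
    exact image_congr fun z _ => projH_eq_inner_smul hθ z
  rw [hproj, hdigits]
  refine IsFiniteUnionIcc.exists_image_smul_eq_iUnion_segment ?_ he
  exact isFiniteUnionIcc_scaledCantor_add hl hl' (by simp [hθy]; linarith)
    (by simp [hθx]; linarith)
end

section
/- Let K ⊂ ℝ^2 be the four corner Cantor set with contraction ratio 1/3, i.e. the attractor of the four maps f_j(x) = x/3 + (2/3)c_j with c_j ∈ {(0,0), (1,0), (1,1), (0,1)}. Let k ≥ 1 be an integer and let θ = (cos α, sin α) ∈ S^1 with α ∈ (0, π/4] and tan α ∈ [3^{−k}, 3^{−(k−1)}). Then the projection P_θ(K) is a union of 2^{k−1} closed line segments of the line L_θ. -/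
open Metric Set
open scoped RealInnerProductSpace ENNReal

/-!
Both the attractor and the thickness of the Cantor set come from one contraction principle: if
`A ⊆ ⋃ fᵢ(A)` with `A` bounded and `B` is a nonempty closed set mapped into itself by the
`r`-Lipschitz maps `fᵢ`, `r < 1`, then `sup_{x ∈ A} d(x, B)` is at most `r` times itself, so
`A ⊆ B`. This identifies `K` with `C × C`, `C` the middle-thirds Cantor set, and shows
`C + sC = [0, 1 + s]` for `1/3 ≤ s ≤ 1`, because the four pieces `Cₐ + s C_b` of `C + sC` then
cover `[0, 1 + s]` by overlapping thirds. Up to an affine change of variable on `L_θ`,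
`P_θ(K)` is `C + tC` with `t = tan α`; splitting `C` into its `2^(k-1)` pieces of generation
`k - 1` writes it as a union of translates of `3^(1-k) (C + 3^(k-1) t C)`, and
`3^(k-1) t ∈ [1/3, 1)`.
-/

open Real
open scoped NNReal

local notation "ℝ²" => EuclideanSpace ℝ (Fin 2)

theorem Metric.infDist_le_mul_infDist_of_mapsTo {X : Type*} [PseudoMetricSpace X] {f : X → X}
    {r : ℝ≥0} (hf : LipschitzWith r f) {B : Set X} (hB : B.Nonempty) (hfB : MapsTo f B B)
    (y : X) : infDist (f y) B ≤ r * infDist y B := by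
  have := hB.to_subtype
  calc infDist (f y) B ≤ ⨅ b : B, r * dist y b :=
        le_ciInf fun b => (infDist_le_dist_of_mem (hfB b.2)).trans (hf.dist_le_mul y b)
    _ = r * infDist y B := by rw [infDist_eq_iInf]; exact (Real.mul_iInf_of_nonneg r.2 _).symm

theorem Metric.subset_of_subset_iUnion_image_of_mapsTo {ι X : Type*} [PseudoMetricSpace X]
    {f : ι → X → X} {r : ℝ≥0} (hr : r < 1) (hf : ∀ i, LipschitzWith r (f i))
    {A B : Set X} (hA : Bornology.IsBounded A) (hB : IsClosed B) (hBne : B.Nonempty)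
    (hAA : A ⊆ ⋃ i, f i '' A) (hBB : ∀ i, MapsTo (f i) B B) : A ⊆ B := by
  obtain ⟨b, hb⟩ := hBne
  obtain ⟨D, hD⟩ := hA.subset_closedBall b
  have hdecay : ∀ n : ℕ, ∀ x ∈ A, infDist x B ≤ r ^ n * D := by
    intro n
    induction n with
    | zero => exact fun x hx => by simpa using (infDist_le_dist_of_mem hb).trans (hD hx)
    | succ n ih =>
      intro x hx
      obtain ⟨i, y, hy, rfl⟩ := mem_iUnion.1 (hAA hx)
      calc infDist (f i y) B ≤ r * infDist y B :=
            infDist_le_mul_infDist_of_mapsTo (hf i) ⟨b, hb⟩ (hBB i) y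
        _ ≤ r * (r ^ n * D) := by gcongr; exact ih y hy
        _ = r ^ (n + 1) * D := by ring
  intro x hx
  have hlim : Filter.Tendsto (fun n : ℕ => (r : ℝ) ^ n * D) Filter.atTop (nhds 0) := by
    simpa using (tendsto_pow_atTop_nhds_zero_of_lt_one r.2 hr).mul_const D
  have hzero : infDist x B = 0 :=
    le_antisymm (ge_of_tendsto' hlim fun n => hdecay n x hx) infDist_nonneg
  rw [← hB.closure_eq]
  exact (mem_closure_iff_infDist_zero ⟨b, hb⟩).2 hzero

theorem lipschitzWith_smul_add {E : Type*} [SeminormedAddCommGroup E] [NormedSpace ℝ E]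
    (c : ℝ≥0) (v : E) : LipschitzWith c fun z : E => (c : ℝ) • z + v :=
  LipschitzWith.of_dist_le_mul fun z w => by
    rw [dist_add_right, dist_smul₀, NNReal.norm_eq]

noncomputable def cantorMap (a : Bool) (x : ℝ) : ℝ := x / 3 + cond a (2 / 3) 0

theorem cantorSet_eq_iUnion_image_cantorMap :
    cantorSet = ⋃ a, cantorMap a '' cantorSet := by
  have h0 : cantorMap false = (· / 3) := funext fun x => by simp [cantorMap]
  have h1 : cantorMap true = fun x => (2 + x) / 3 :=
    funext fun x => by simp only [cantorMap, cond_true]; ring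
  conv_lhs => rw [cantorSet_eq_union_halves, union_comm, union_eq_iUnion]
  refine iUnion_congr fun a => ?_
  cases a <;> simp only [h0, h1, cond_true, cond_false]

theorem cantorMap_mem_cantorSet (a : Bool) {x : ℝ} (hx : x ∈ cantorSet) :
    cantorMap a x ∈ cantorSet := by
  rw [cantorSet_eq_iUnion_image_cantorMap]
  exact mem_iUnion.2 ⟨a, mem_image_of_mem _ hx⟩

theorem one_sub_mem_cantorSet {x : ℝ} (hx : x ∈ cantorSet) : 1 - x ∈ cantorSet := by
  have hpre : ∀ n, ∀ x ∈ preCantorSet n, 1 - x ∈ preCantorSet n := by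
    intro n
    induction n with
    | zero => exact fun x hx => ⟨by linarith [hx.2], by linarith [hx.1]⟩
    | succ n ih =>
      rintro x (⟨y, hy, rfl⟩ | ⟨y, hy, rfl⟩)
      · exact Or.inr ⟨1 - y, ih y hy, by ring⟩
      · exact Or.inl ⟨1 - y, ih y hy, by ring⟩
  exact mem_iInter.2 fun n => hpre n x (mem_iInter.1 hx n)

theorem cantorMap_image_Icc (a : Bool) (p q : ℝ) :
    cantorMap a '' Icc p q = Icc (cantorMap a p) (cantorMap a q) := by
  have : cantorMap a = fun x => (1 / 3) * x + cond a (2 / 3) 0 :=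
    funext fun x => by simp only [cantorMap]; ring
  rw [this, image_affine_Icc' (by norm_num)]

theorem isCompact_image2_add_mul_cantorSet (s : ℝ) :
    IsCompact (image2 (fun x y => x + s * y) cantorSet cantorSet) := by
  rw [← image_prod]
  exact (isCompact_cantorSet.prod isCompact_cantorSet).image (by fun_prop)

theorem image2_add_mul_cantorSet_of_mem_Icc {s : ℝ} (hs : s ∈ Icc (1 / 3) 1) :
    image2 (fun x y => x + s * y) cantorSet cantorSet = Icc 0 (1 + s) := by
  obtain ⟨hs₁, hs₂⟩ := hs
  refine Subset.antisymm ?_ ?_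
  · rintro _ ⟨x, hx, y, hy, rfl⟩
    obtain ⟨hx₀, hx₁⟩ := cantorSet_subset_unitInterval hx
    obtain ⟨hy₀, hy₁⟩ := cantorSet_subset_unitInterval hy
    constructor <;> nlinarith
  let g : Bool × Bool → ℝ → ℝ := fun p u =>
    (1 / 3 : ℝ) • u + (cond p.1 (2 / 3) 0 + s * cond p.2 (2 / 3) 0)
  refine subset_of_subset_iUnion_image_of_mapsTo (f := g) (r := 1 / 3) (by norm_num)
    (fun p => by simpa [g] using lipschitzWith_smul_add (1 / 3) (g p 0)) (isBounded_Icc _ _)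
    (isCompact_image2_add_mul_cantorSet s).isClosed
    ⟨0, 0, zero_mem_cantorSet, 0, zero_mem_cantorSet, by simp⟩ ?_ ?_
  · rintro u ⟨hu₀, hu₁⟩
    simp only [mem_iUnion, mem_image, mem_Icc, Prod.exists, g, smul_eq_mul]
    rcases le_or_gt u ((1 + s) / 3) with h₁ | h₁
    · exact ⟨false, false, 3 * u, ⟨by linarith, by linarith⟩,
        by simp only [cond_false]; ring⟩
    rcases le_or_gt u (2 / 3) with h₂ | h₂
    · exact ⟨false, true, 3 * u - 2 * s, ⟨by linarith, by linarith⟩,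
        by simp only [cond_false, cond_true]; ring⟩
    rcases le_or_gt u ((3 + s) / 3) with h₃ | h₃
    · exact ⟨true, false, 3 * u - 2, ⟨by linarith, by linarith⟩,
        by simp only [cond_false, cond_true]; ring⟩
    · exact ⟨true, true, 3 * u - 2 - 2 * s, ⟨by linarith, by linarith⟩,
        by simp only [cond_true]; ring⟩
  · rintro p _ ⟨x, hx, y, hy, rfl⟩
    refine ⟨cantorMap p.1 x, cantorMap_mem_cantorSet _ hx, cantorMap p.2 y,
      cantorMap_mem_cantorSet _ hy, ?_⟩
    simp only [g, cantorMap, smul_eq_mul]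
    ring

theorem image2_add_mul_cantorSet_eq_iUnion (t : ℝ) :
    image2 (fun x y => x + t * y) cantorSet cantorSet =
      ⋃ a, cantorMap a '' image2 (fun x y => x + 3 * t * y) cantorSet cantorSet := by
  nth_rw 1 [cantorSet_eq_iUnion_image_cantorMap]
  simp only [image2_iUnion_left, image2_image_left, image_image2]
  refine iUnion_congr fun a => ?_
  congr 1
  funext x y
  simp only [cantorMap]
  ring

theorem exists_image2_add_mul_cantorSet_eq_iUnion_Icc (m : ℕ) {t : ℝ}
    (ht : t ∈ Icc ((1 / 3) ^ (m + 1)) ((1 / 3) ^ m)) :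
    ∃ a : (Fin m → Bool) → ℝ, image2 (fun x y => x + t * y) cantorSet cantorSet =
      ⋃ b, Icc (a b) (a b + ((1 / 3) ^ m + t)) := by
  induction m generalizing t with
  | zero =>
    refine ⟨fun _ => 0, ?_⟩
    rw [image2_add_mul_cantorSet_of_mem_Icc (by simpa using ht), iUnion_const]
    simp
  | succ m ih =>
    obtain ⟨ht₁, ht₂⟩ := ht
    obtain ⟨a, ha⟩ := ih (t := 3 * t) ⟨by rw [pow_succ] at ht₁; linarith,
      by rw [pow_succ] at ht₂; linarith⟩
    refine ⟨fun b => cantorMap (b 0) (a (Fin.tail b)), ?_⟩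
    rw [image2_add_mul_cantorSet_eq_iUnion,
      ← (Fin.consEquiv fun _ => Bool).surjective.iUnion_comp, iUnion_prod']
    refine iUnion_congr fun b₀ => ?_
    rw [ha, image_iUnion]
    refine iUnion_congr fun b => ?_
    simp only [cantorMap_image_Icc, Fin.consEquiv, Equiv.coe_fn_mk, Fin.cons_zero, Fin.tail_cons]
    congr 1
    simp only [cantorMap]
    ring

def cantorDust : Set ℝ² := {z | z 0 ∈ cantorSet ∧ z 1 ∈ cantorSet}

theorem isCompact_cantorDust : IsCompact cantorDust := by
  have : cantorDust = EuclideanSpace.equiv (Fin 2) ℝ ⁻¹' univ.pi fun _ => cantorSet := by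
    ext z
    simp [cantorDust, Fin.forall_fin_two]
  rw [this]
  exact (EuclideanSpace.equiv (Fin 2) ℝ).toHomeomorph.isCompact_preimage.2
    (isCompact_univ_pi fun _ => isCompact_cantorSet)

noncomputable def cornerMap (a b : Bool) (z : ℝ²) : ℝ² :=
  (1 / 3 : ℝ) • z + (2 / 3 : ℝ) • !₂[cond a 1 0, cond b 1 0]

theorem cornerMap_apply_zero (a b : Bool) (z : ℝ²) :
    cornerMap a b z 0 = cantorMap a (z 0) := by
  simp only [cornerMap, cantorMap, PiLp.add_apply, PiLp.smul_apply, smul_eq_mul,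
    Matrix.cons_val_zero]
  cases a <;> simp only [cond_true, cond_false] <;> ring

theorem cornerMap_apply_one (a b : Bool) (z : ℝ²) :
    cornerMap a b z 1 = cantorMap b (z 1) := by
  simp only [cornerMap, cantorMap, PiLp.add_apply, PiLp.smul_apply, smul_eq_mul,
    Matrix.cons_val_one, Matrix.cons_val_fin_one]
  cases b <;> simp only [cond_true, cond_false] <;> ring

theorem lipschitzWith_cornerMap (a b : Bool) : LipschitzWith (1 / 3) (cornerMap a b) := by
  unfold cornerMap
  simpa using
    lipschitzWith_smul_add (1 / 3) ((2 / 3 : ℝ) • !₂[cond a (1 : ℝ) 0, cond b 1 0])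

theorem mapsTo_cornerMap_cantorDust (a b : Bool) : MapsTo (cornerMap a b) cantorDust cantorDust :=
  fun z hz => ⟨by rw [cornerMap_apply_zero]; exact cantorMap_mem_cantorSet a hz.1,
    by rw [cornerMap_apply_one]; exact cantorMap_mem_cantorSet b hz.2⟩

theorem cantorDust_subset_iUnion_image_cornerMap :
    cantorDust ⊆ ⋃ p : Bool × Bool, cornerMap p.1 p.2 '' cantorDust := by
  rintro z ⟨hz₀, hz₁⟩
  rw [cantorSet_eq_iUnion_image_cantorMap] at hz₀ hz₁
  obtain ⟨a, x, hx, hax⟩ := mem_iUnion.1 hz₀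
  obtain ⟨b, y, hy, hby⟩ := mem_iUnion.1 hz₁
  refine mem_iUnion.2 ⟨(a, b), !₂[x, y], ⟨by simpa using hx, by simpa using hy⟩, ?_⟩
  ext i
  fin_cases i
  · simpa [cornerMap_apply_zero] using hax
  · simpa [cornerMap_apply_one] using hby

theorem range_fourCorners :
    range ![!₂[0, 0], !₂[1, 0], !₂[1, 1], !₂[0, 1]] =
      range fun p : Bool × Bool => (!₂[cond p.1 1 0, cond p.2 1 0] : ℝ²) := by
  ext v
  simp only [Matrix.range_cons, Matrix.range_empty, union_empty, union_singleton, union_insert,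
    mem_insert_iff, mem_singleton_iff, mem_range, Prod.exists, Bool.exists_bool, cond_false,
    cond_true]
  tauto

theorem eq_cantorDust_of_eq_iUnion_image {ι : Type*}
    {f : ι → ℝ² → ℝ²}
    (hf : range f = range fun p : Bool × Bool => cornerMap p.1 p.2)
    {K : Set ℝ²} (hKc : IsCompact K) (hKne : K.Nonempty)
    (hK : K = ⋃ i, f i '' K) : K = cantorDust := by
  have hlip : ∀ i, LipschitzWith (1 / 3) (f i) := fun i => by
    obtain ⟨p, hp⟩ := hf ▸ mem_range_self i
    exact hp ▸ lipschitzWith_cornerMap p.1 p.2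
  refine Subset.antisymm ?_ ?_
  · refine subset_of_subset_iUnion_image_of_mapsTo (by norm_num) hlip hKc.isBounded
      isCompact_cantorDust.isClosed ⟨0, by simp [cantorDust, zero_mem_cantorSet]⟩ hK.subset
      fun i => ?_
    obtain ⟨p, hp⟩ := hf ▸ mem_range_self i
    exact hp ▸ mapsTo_cornerMap_cantorDust p.1 p.2
  · refine subset_of_subset_iUnion_image_of_mapsTo (f := fun p : Bool × Bool => cornerMap p.1 p.2)
      (by norm_num) (fun p => lipschitzWith_cornerMap p.1 p.2) isCompact_cantorDust.isBounded
      hKc.isClosed hKne cantorDust_subset_iUnion_image_cornerMap fun p => ?_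
    obtain ⟨i, hi⟩ := hf.symm ▸ mem_range_self p
    rw [← hi]
    exact fun z hz => hK ▸ mem_iUnion.2 ⟨i, mem_image_of_mem _ hz⟩

theorem projH_cos_sin (α : ℝ) (z : ℝ²) :
    projH !₂[cos α, sin α] 0 z =
      (z 0 * sin α - z 1 * cos α) • !₂[sin α, -cos α] := by
  have h := sin_sq_add_cos_sq α
  have hinner : ⟪z, !₂[cos α, sin α]⟫ = z 0 * cos α + z 1 * sin α := by
    simp only [PiLp.inner_apply, RCLike.inner_apply, Real.ringHom_apply, Fin.sum_univ_two,
      Matrix.cons_val_zero, Matrix.cons_val_one, Matrix.cons_val_fin_one]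
    ring
  ext i
  fin_cases i
  · simp only [projH, sub_zero, hinner, Fin.zero_eta, PiLp.sub_apply, PiLp.smul_apply,
      Matrix.cons_val_zero, smul_eq_mul]
    linear_combination -(z 0) * h
  · simp only [projH, sub_zero, hinner, Fin.mk_one, PiLp.sub_apply, PiLp.smul_apply,
      Matrix.cons_val_one, Matrix.cons_val_fin_one, smul_eq_mul, mul_neg]
    linear_combination -(z 1) * h

theorem projH_image_cantorDust {α : ℝ} (hα : cos α ≠ 0) :
    projH !₂[cos α, sin α] 0 '' cantorDust =
      AffineMap.lineMap (-cos α • !₂[sin α, -cos α]) 0 ''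
        image2 (fun x y => x + tan α * y) cantorSet cantorSet := by
  have hline : ∀ u : ℝ, AffineMap.lineMap (-cos α • !₂[sin α, -cos α])
      (0 : ℝ²) u = (cos α * (u - 1)) • !₂[sin α, -cos α] := by
    intro u
    rw [AffineMap.lineMap_apply]
    simp only [vsub_eq_sub, vadd_eq_add, zero_sub]
    module
  have htan : cos α * tan α = sin α := by
    rw [tan_eq_sin_div_cos]; field_simp
  ext w
  simp only [mem_image, mem_image2, hline, projH_cos_sin]
  constructor
  · rintro ⟨z, ⟨hz₀, hz₁⟩, rfl⟩
    refine ⟨_, ⟨1 - z 1, one_sub_mem_cantorSet hz₁, z 0, hz₀, rfl⟩, ?_⟩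
    congr 1
    linear_combination z 0 * htan
  · rintro ⟨_, ⟨x, hx, y, hy, rfl⟩, rfl⟩
    refine ⟨!₂[y, 1 - x], ⟨by simpa using hy, by simpa using one_sub_mem_cantorSet hx⟩,
      ?_⟩
    congr 1
    simp only [Matrix.cons_val_zero, Matrix.cons_val_one, Matrix.cons_val_fin_one]
    linear_combination -y * htan

theorem range_fourCornerMaps {c : Fin 4 → ℝ²}
    (hc : c = ![!₂[0, 0], !₂[1, 0], !₂[1, 1], !₂[0, 1]])
    {f : Fin 4 → ℝ² → ℝ²}
    (hf : ∀ j x, f j x = (1 / 3 : ℝ) • x + (2 / 3 : ℝ) • c j) :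
    range f = range fun p : Bool × Bool => cornerMap p.1 p.2 := by
  have : f = (fun v z => (1 / 3 : ℝ) • z + (2 / 3 : ℝ) • v) ∘ c := funext₂ hf
  rw [this, range_comp, hc, range_fourCorners, ← range_comp]
  rfl

theorem stmt16_general (c : Fin 4 → EuclideanSpace ℝ (Fin 2))
    (hc : c = ![!₂[0, 0], !₂[1, 0], !₂[1, 1], !₂[0, 1]])
    (f : Fin 4 → EuclideanSpace ℝ (Fin 2) → EuclideanSpace ℝ (Fin 2))
    (hf : ∀ j x, f j x = (1/3 : ℝ) • x + (2/3 : ℝ) • c j)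
    (K : Set (EuclideanSpace ℝ (Fin 2)))
    (hKc : IsCompact K) (hKne : K.Nonempty)
    (hattr : K = ⋃ j, f j '' K)
    (k : ℕ) (hk : 1 ≤ k)
    (α : ℝ)
    (htan : Real.tan α ∈ Set.Ico ((3 : ℝ) ^ (-(k : ℤ))) ((3 : ℝ) ^ (-((k : ℤ) - 1))))
    (θ : EuclideanSpace ℝ (Fin 2)) (hθ : θ = !₂[Real.cos α, Real.sin α]) :
    ∃ a b : Fin (2 ^ (k - 1)) → EuclideanSpace ℝ (Fin 2),
      (∀ j, a j ≠ b j) ∧ projH θ 0 '' K = ⋃ j, segment ℝ (a j) (b j) := by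
  subst hθ
  have hpow : ∀ n : ℕ, (3 : ℝ) ^ (-(n : ℤ)) = (1 / 3) ^ n := fun n => by
    rw [zpow_neg, zpow_natCast, one_div, inv_pow]
  have ht : tan α ∈ Ico ((1 / 3 : ℝ) ^ (k - 1 + 1)) ((1 / 3) ^ (k - 1)) := by
    rwa [Nat.sub_add_cancel hk, ← hpow, ← hpow, Nat.cast_pred hk]
  have htan₀ : 0 < tan α := (pow_pos (by norm_num) _).trans_le ht.1
  have hcos : cos α ≠ 0 := fun h => by simp [tan_eq_sin_div_cos, h] at htan₀
  obtain ⟨a, ha⟩ :=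
    exists_image2_add_mul_cantorSet_eq_iUnion_Icc (k - 1) (Ico_subset_Icc_self ht)
  let e := Fintype.equivFinOfCardEq (by simp : Fintype.card (Fin (k - 1) → Bool) = 2 ^ (k - 1))
  set L := AffineMap.lineMap (k := ℝ) (-cos α • !₂[sin α, -cos α]) (0 : ℝ²)
  have hlen : 0 < (1 / 3 : ℝ) ^ (k - 1) + tan α := by positivity
  refine ⟨fun j => L (a (e.symm j)), fun j => L (a (e.symm j) + ((1 / 3) ^ (k - 1) + tan α)),
    fun j => ?_, ?_⟩
  · have hne : (-cos α • !₂[sin α, -cos α] : ℝ²) ≠ 0 :=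
      fun h => hcos (by simpa using congrArg (· 1) h)
    exact (AffineMap.lineMap_injective ℝ hne).ne (lt_add_of_pos_right _ hlen).ne
  · rw [eq_cantorDust_of_eq_iUnion_image (range_fourCornerMaps hc hf) hKc hKne hattr,
      projH_image_cantorDust hcos, ha, image_iUnion, ← e.symm.surjective.iUnion_comp]
    refine iUnion_congr fun j => ?_
    rw [← segment_eq_Icc (by linarith), image_segment]

/-- For the four corner Cantor set with contraction ratio `1/3` and a direction
`θ = (cos α, sin α)` with `α ∈ (0, π/4]` and `tan α ∈ [3^{-k}, 3^{-(k-1)})`, the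
projection `P_θ(K)` is a union of `2^{k-1}` (nondegenerate) closed line segments. -/
theorem stmt16 (c : Fin 4 → EuclideanSpace ℝ (Fin 2))
    (hc : c = ![!₂[0, 0], !₂[1, 0], !₂[1, 1], !₂[0, 1]])
    (f : Fin 4 → EuclideanSpace ℝ (Fin 2) → EuclideanSpace ℝ (Fin 2))
    (hf : ∀ j x, f j x = (1/3 : ℝ) • x + (2/3 : ℝ) • c j)
    (K : Set (EuclideanSpace ℝ (Fin 2)))
    (hKc : IsCompact K) (hKne : K.Nonempty)
    (hattr : K = ⋃ j, f j '' K)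
    (k : ℕ) (hk : 1 ≤ k)
    (α : ℝ) (hα : α ∈ Set.Ioc 0 (Real.pi / 4))
    (htan : Real.tan α ∈ Set.Ico ((3 : ℝ) ^ (-(k : ℤ))) ((3 : ℝ) ^ (-((k : ℤ) - 1))))
    (θ : EuclideanSpace ℝ (Fin 2)) (hθ : θ = !₂[Real.cos α, Real.sin α]) :
    ∃ a b : Fin (2 ^ (k - 1)) → EuclideanSpace ℝ (Fin 2),
      (∀ j, a j ≠ b j) ∧ projH θ 0 '' K = ⋃ j, segment ℝ (a j) (b j) :=
  stmt16_general c hc f hf K hKc hKne hattr k hk α htan θ hθ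
end

section
/- Let K ⊂ [0,1]^2 be the attractor of the iterated function system {f_1, f_2, f_3} on ℝ^2, where f_1(z) = z/2 + (1/2, 0), f_2(z) = z/2 + (1/2, 1/2), and f_3(z) = (1/4)R(z) + (1/4, 3/4) with R the rotation by angle π/2, i.e. R(x,y) = (−y, x). Then the projection of K onto the y-axis is the interval {0} × [0,1], and the projection of K onto the x-axis is the set (⋃_{k=0}^∞ [1 − 2^{−k}, 1 − 2^{−k} + 2^{−k−2}] ∪ {1}) × {0}; in particular, this projection is a countably infinite union of pairwise disjoint closed intervals together with the point 1. -/
open Metric Set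
open scoped RealInnerProductSpace ENNReal

/-- The point of the plane `ℝ² = EuclideanSpace ℝ (Fin 2)` with coordinates `(a, b)`. -/
noncomputable def e2 (a b : ℝ) : EuclideanSpace ℝ (Fin 2) :=
  (EuclideanSpace.equiv (Fin 2) ℝ).symm ![a, b]

/-!
The `y`-projection `Y` of `K` is closed and invariant under the two halvings `y ↦ y / 2` and
`y ↦ y / 2 + 1 / 2`; their images of `[0,1]` cover `[0,1]`, so `Y` is dense in, hence equal to,
`[0,1]`. On the `x`-coordinate both homotheties act as `g x = x / 2 + 1 / 2`, while the rotated
piece `f₃` maps the full vertical interval `Y` onto `[0, 1/4]`; thus `X = [0, 1/4] ∪ g(X)`.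
Unrolling this, every point of `X` lies in some block `gᵏ([0, 1/4])` or in
`gⁿ(X) ⊆ [1 - 2⁻ⁿ, 1]` for all `n`, i.e. equals the fixed point `1` of `g`.
-/

open Filter Function Topology

theorem eq_Icc_of_mapsTo_halves {Y : Set ℝ} (hcl : IsClosed Y) (hne : Y.Nonempty)
    (hsub : Y ⊆ Icc 0 1) (h₁ : MapsTo (· / 2) Y Y) (h₂ : MapsTo (· / 2 + 1 / 2) Y Y) :
    Y = Icc 0 1 := by
  have approx : ∀ n : ℕ, ∀ t ∈ Icc (0 : ℝ) 1, ∃ y ∈ Y, |y - t| ≤ (1 / 2) ^ n := by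
    intro n
    induction n with
    | zero =>
      rintro t ⟨ht₀, ht₁⟩
      obtain ⟨y, hy⟩ := hne
      obtain ⟨hy₀, hy₁⟩ := hsub hy
      exact ⟨y, hy, by rw [pow_zero, abs_le]; constructor <;> linarith⟩
    | succ n ih =>
      rintro t ⟨ht₀, ht₁⟩
      rcases le_or_gt t (1 / 2) with ht | ht
      · obtain ⟨y, hy, hyt⟩ := ih (2 * t) ⟨by linarith, by linarith⟩
        refine ⟨y / 2, h₁ hy, ?_⟩
        rw [show y / 2 - t = (y - 2 * t) / 2 by ring, abs_div, abs_two, pow_succ]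
        linarith
      · obtain ⟨y, hy, hyt⟩ := ih (2 * t - 1) ⟨by linarith, by linarith⟩
        refine ⟨y / 2 + 1 / 2, h₂ hy, ?_⟩
        rw [show y / 2 + 1 / 2 - t = (y - (2 * t - 1)) / 2 by ring, abs_div, abs_two, pow_succ]
        linarith
  refine hsub.antisymm fun t ht => hcl.closure_subset (Metric.mem_closure_iff.2 fun ε hε => ?_)
  obtain ⟨n, hn⟩ := exists_pow_lt_of_lt_one hε (by norm_num : (1 / 2 : ℝ) < 1)
  obtain ⟨y, hy, hyt⟩ := approx n t ht
  exact ⟨y, hy, by rw [Real.dist_eq, abs_sub_comm]; linarith⟩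

theorem subset_iUnion_iterate_image_union {α : Type*} {g : α → α} {A X : Set α}
    (h : X ⊆ A ∪ g '' X) (n : ℕ) : X ⊆ (⋃ k, g^[k] '' A) ∪ g^[n] '' X := by
  induction n with
  | zero => simp
  | succ n ih =>
    have step : g^[n] '' X ⊆ g^[n] '' A ∪ g^[n + 1] '' X := by
      rw [iterate_succ, image_comp, ← image_union]
      exact image_mono h
    refine ih.trans (union_subset subset_union_left (step.trans ?_))
    exact union_subset_union_left _ (subset_iUnion (fun k => g^[k] '' A) n)

noncomputable def halveTowardOne (x : ℝ) : ℝ := x / 2 + 1 / 2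

theorem halveTowardOne_iterate (n : ℕ) :
    halveTowardOne^[n] = fun x => (1 / 2) ^ n * x + (1 - (1 / 2) ^ n) := by
  induction n with
  | zero => funext x; simp
  | succ n ih =>
    funext x
    rw [iterate_succ_apply', ih, halveTowardOne]
    ring

theorem halveTowardOne_iterate_image_Icc (n : ℕ) (a b : ℝ) :
    halveTowardOne^[n] '' Icc a b =
      Icc ((1 / 2) ^ n * a + (1 - (1 / 2) ^ n)) ((1 / 2) ^ n * b + (1 - (1 / 2) ^ n)) := by
  rw [halveTowardOne_iterate]
  exact image_affine_Icc' (by positivity) _ _ _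

def blockInterval (k : ℕ) : Set ℝ :=
  Icc (1 - 2 ^ (-(k : ℤ))) (1 - 2 ^ (-(k : ℤ)) + 2 ^ (-(k : ℤ) - 2))

theorem blockInterval_eq (k : ℕ) :
    blockInterval k = Icc (1 - (1 / 2) ^ k) (1 - (1 / 2) ^ k + (1 / 2) ^ k / 4) := by
  rw [blockInterval, zpow_sub₀ two_ne_zero, zpow_neg, zpow_natCast, one_div, inv_pow]
  norm_num

theorem halveTowardOne_iterate_image_Icc_zero_quarter (k : ℕ) :
    halveTowardOne^[k] '' Icc 0 (1 / 4) = blockInterval k := by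
  rw [halveTowardOne_iterate_image_Icc, blockInterval_eq]
  congr 1 <;> ring

theorem blockInterval_subset_Iio (k : ℕ) : blockInterval k ⊆ Iio (1 - (1 / 2) ^ (k + 1)) := by
  rw [blockInterval_eq]
  intro x hx
  have : (0 : ℝ) < (1 / 2) ^ k := by positivity
  rw [mem_Iio, pow_succ]
  linarith [hx.2]

theorem pairwise_disjoint_blockInterval : Pairwise (Disjoint on blockInterval) := by
  refine (pairwise_disjoint_on _).2 fun k l hkl => ?_
  refine disjoint_left.2 fun x hxk hxl => ?_
  have hxk' : x < 1 - (1 / 2) ^ (k + 1) := blockInterval_subset_Iio k hxk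
  have hle : (1 / 2 : ℝ) ^ l ≤ (1 / 2) ^ (k + 1) :=
    pow_le_pow_of_le_one (by norm_num) (by norm_num) hkl
  rw [blockInterval_eq] at hxl
  linarith [hxl.1]

theorem one_notMem_blockInterval (k : ℕ) : (1 : ℝ) ∉ blockInterval k := fun h => by
  have hlt : (1 : ℝ) < 1 - (1 / 2) ^ (k + 1) := blockInterval_subset_Iio k h
  have : (0 : ℝ) < (1 / 2) ^ (k + 1) := by positivity
  linarith

theorem one_mem_closure_iUnion_blockInterval : (1 : ℝ) ∈ closure (⋃ k, blockInterval k) := by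
  have hlim : Tendsto (fun k : ℕ => 1 - (1 / 2 : ℝ) ^ k) atTop (𝓝 1) := by
    simpa using tendsto_const_nhds.sub
      (tendsto_pow_atTop_nhds_zero_of_lt_one (by norm_num : (0 : ℝ) ≤ 1 / 2) (by norm_num))
  refine mem_closure_of_tendsto hlim (Eventually.of_forall fun k => mem_iUnion.2 ⟨k, ?_⟩)
  rw [blockInterval_eq]
  exact left_mem_Icc.2 (le_add_of_nonneg_right (by positivity))

theorem eq_insert_one_iUnion_blockInterval {X : Set ℝ} (hcl : IsClosed X) (hsub : X ⊆ Icc 0 1)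
    (hX : X = Icc 0 (1 / 4) ∪ halveTowardOne '' X) : X = insert 1 (⋃ k, blockInterval k) := by
  have hblocks : ⋃ k, blockInterval k ⊆ X := iUnion_subset fun k => by
    have hmaps : MapsTo halveTowardOne X X := fun x hx => hX ▸ Or.inr (mem_image_of_mem _ hx)
    rw [← halveTowardOne_iterate_image_Icc_zero_quarter]
    exact (image_mono (hX ▸ subset_union_left)).trans (hmaps.iterate k).image_subset
  refine subset_antisymm (fun x hx => ?_)
    (insert_subset (hcl.closure_subset_iff.2 hblocks one_mem_closure_iUnion_blockInterval) hblocks)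
  rcases (hsub hx).2.eq_or_lt with rfl | hx₁
  · exact mem_insert _ _
  obtain ⟨n, hn⟩ := exists_pow_lt_of_lt_one (sub_pos.2 hx₁) (by norm_num : (1 / 2 : ℝ) < 1)
  rcases subset_iUnion_iterate_image_union hX.le n hx with hA | ⟨y, hy, rfl⟩
  · simp_rw [halveTowardOne_iterate_image_Icc_zero_quarter] at hA
    exact mem_insert_of_mem _ hA
  · have : (0 : ℝ) ≤ (1 / 2) ^ n * y := mul_nonneg (by positivity) (hsub hy).1
    rw [halveTowardOne_iterate] at hn
    linarith

@[simp] theorem e2_apply_zero (a b : ℝ) : e2 a b 0 = a := rfl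

@[simp] theorem e2_apply_one (a b : ℝ) : e2 a b 1 = b := rfl

theorem e2_eq_iff {a b : ℝ} {z : EuclideanSpace ℝ (Fin 2)} :
    e2 a b = z ↔ a = z 0 ∧ b = z 1 := by
  refine ⟨fun h => h ▸ ⟨rfl, rfl⟩, fun ⟨ha, hb⟩ => ?_⟩
  ext i
  fin_cases i <;> simp [ha, hb]

theorem image_e2_zero_left (S : Set ℝ) : (e2 0 ·) '' S = {z | z 0 = 0 ∧ z 1 ∈ S} := by
  ext z
  simp only [mem_image, e2_eq_iff]
  constructor
  · rintro ⟨y, hy, h0, rfl⟩; exact ⟨h0.symm, hy⟩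
  · rintro ⟨h0, hy⟩; exact ⟨z 1, hy, h0.symm, rfl⟩

theorem image_e2_zero_right (S : Set ℝ) : (e2 · 0) '' S = {z | z 1 = 0 ∧ z 0 ∈ S} := by
  ext z
  simp only [mem_image, e2_eq_iff]
  constructor
  · rintro ⟨x, hx, rfl, h1⟩; exact ⟨h1.symm, hx⟩
  · rintro ⟨h1, hx⟩; exact ⟨z 0, hx, rfl, h1.symm⟩

section Attractor

variable {f₁ f₂ f₃ : EuclideanSpace ℝ (Fin 2) → EuclideanSpace ℝ (Fin 2)}
  {K : Set (EuclideanSpace ℝ (Fin 2))}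

theorem image_apply_one_eq_Icc (hKc : IsCompact K) (hKne : K.Nonempty)
    (hKsub : MapsTo (· 1) K (Icc 0 1)) (h₁ : MapsTo f₁ K K) (h₂ : MapsTo f₂ K K)
    (hf₁ : ∀ z, f₁ z 1 = z 1 / 2) (hf₂ : ∀ z, f₂ z 1 = z 1 / 2 + 1 / 2) :
    (· 1) '' K = Icc 0 1 := by
  refine eq_Icc_of_mapsTo_halves (hKc.image (EuclideanSpace.proj 1).continuous).isClosed
    (hKne.image _) hKsub.image_subset ?_ ?_
  · rintro _ ⟨z, hz, rfl⟩; exact ⟨f₁ z, h₁ hz, hf₁ z⟩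
  · rintro _ ⟨z, hz, rfl⟩; exact ⟨f₂ z, h₂ hz, hf₂ z⟩

theorem image_apply_zero_eq (hf₁ : ∀ z, f₁ z 0 = halveTowardOne (z 0))
    (hf₂ : ∀ z, f₂ z 0 = halveTowardOne (z 0)) (hf₃ : ∀ z, f₃ z 0 = (1 - z 1) / 4)
    (hY : (· 1) '' K = Icc 0 1) (hattr : K = f₁ '' K ∪ f₂ '' K ∪ f₃ '' K) :
    (· 0) '' K = Icc 0 (1 / 4) ∪ halveTowardOne '' ((· 0) '' K) := by
  have h₃ : (fun y : ℝ => (1 - y) / 4) '' Icc 0 1 = Icc 0 (1 / 4) := by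
    ext x
    simp only [mem_image, mem_Icc]
    constructor
    · rintro ⟨y, ⟨hy₀, hy₁⟩, rfl⟩; constructor <;> linarith
    · rintro ⟨hx₀, hx₁⟩; exact ⟨1 - 4 * x, ⟨by linarith, by linarith⟩, by ring⟩
  conv_lhs => rw [hattr]
  rw [← h₃, ← hY]
  simp only [image_union, image_image, hf₁, hf₂, hf₃, union_self]
  exact union_comm _ _

end Attractor

/-- For the attractor of the IFS `{f₁, f₂, f₃}` of Example 3 (two homotheties of ratio
`1/2` and one similarity of ratio `1/4` rotating by `π/2`), the projection onto the
`y`-axis is `{0} × [0,1]` and the projection onto the `x`-axis is the countable union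
`⋃ₖ [1 - 2⁻ᵏ, 1 - 2⁻ᵏ + 2⁻ᵏ⁻²] ∪ {1}`, a countably infinite union of pairwise disjoint
closed intervals together with the point `1`. -/
theorem stmt17 (f₁ f₂ f₃ : EuclideanSpace ℝ (Fin 2) → EuclideanSpace ℝ (Fin 2))
    (hf₁ : ∀ z, f₁ z = (1/2 : ℝ) • z + e2 (1/2) 0)
    (hf₂ : ∀ z, f₂ z = (1/2 : ℝ) • z + e2 (1/2) (1/2))
    (hf₃ : ∀ z, f₃ z = (1/4 : ℝ) • e2 (-(z 1)) (z 0) + e2 (1/4) (3/4))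
    (K : Set (EuclideanSpace ℝ (Fin 2)))
    (hKc : IsCompact K) (hKne : K.Nonempty)
    (hKsub : K ⊆ {z | z 0 ∈ Set.Icc (0:ℝ) 1 ∧ z 1 ∈ Set.Icc (0:ℝ) 1})
    (hattr : K = f₁ '' K ∪ f₂ '' K ∪ f₃ '' K) :
    (fun z : EuclideanSpace ℝ (Fin 2) => e2 0 (z 1)) '' K =
        {z : EuclideanSpace ℝ (Fin 2) | z 0 = 0 ∧ z 1 ∈ Set.Icc (0:ℝ) 1} ∧
    (fun z : EuclideanSpace ℝ (Fin 2) => e2 (z 0) 0) '' K =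
        {z : EuclideanSpace ℝ (Fin 2) | z 1 = 0 ∧ (z 0 = 1 ∨ ∃ k : ℕ,
          z 0 ∈ Set.Icc (1 - 2 ^ (-(k : ℤ))) (1 - 2 ^ (-(k : ℤ)) + 2 ^ (-(k : ℤ) - 2)))} ∧
    (∀ k l : ℕ, k ≠ l →
      Disjoint (Set.Icc (1 - (2:ℝ) ^ (-(k : ℤ))) (1 - 2 ^ (-(k : ℤ)) + 2 ^ (-(k : ℤ) - 2)))
        (Set.Icc (1 - (2:ℝ) ^ (-(l : ℤ))) (1 - 2 ^ (-(l : ℤ)) + 2 ^ (-(l : ℤ) - 2)))) ∧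
    ∀ k : ℕ, (1 : ℝ) ∉
      Set.Icc (1 - (2:ℝ) ^ (-(k : ℤ))) (1 - 2 ^ (-(k : ℤ)) + 2 ^ (-(k : ℤ) - 2)) := by
  have hmaps₁ : MapsTo f₁ K K := fun z hz => hattr ▸ Or.inl (Or.inl ⟨z, hz, rfl⟩)
  have hmaps₂ : MapsTo f₂ K K := fun z hz => hattr ▸ Or.inl (Or.inr ⟨z, hz, rfl⟩)
  have hY : (· 1) '' K = Icc 0 1 :=
    image_apply_one_eq_Icc hKc hKne (fun z hz => (hKsub hz).2) hmaps₁ hmaps₂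
      (fun z => by simp [hf₁]; ring) (fun z => by simp [hf₂]; ring)
  have hX : (· 0) '' K = insert 1 (⋃ k, blockInterval k) := by
    refine eq_insert_one_iUnion_blockInterval
      (hKc.image (EuclideanSpace.proj 0).continuous).isClosed
      (image_subset_iff.2 fun z hz => (hKsub hz).1) (image_apply_zero_eq ?_ ?_ ?_ hY hattr) <;>
    · intro z; simp [hf₁, hf₂, hf₃, halveTowardOne]; ring
  refine ⟨?_, ?_, pairwise_disjoint_blockInterval, one_notMem_blockInterval⟩
  · rw [← image_image (e2 0) (fun z : EuclideanSpace ℝ (Fin 2) => z 1), hY, image_e2_zero_left]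
  · rw [← image_image (e2 · 0) (fun z : EuclideanSpace ℝ (Fin 2) => z 0), hX,
      image_e2_zero_right]
    simp only [mem_insert_iff, mem_iUnion, blockInterval]
end
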